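/- Let Γ be a discrete subgroup of E(n), and let A = λA′ where A′ ∈ O(n) and 0 < λ ≤ 1. Suppose that AΓA⁻¹ ⊆ Γ, where AγA⁻¹ denotes the isometry x ↦ A(γ(A⁻¹x)). Then AΓA⁻¹ = Γ. -/

import Mathlib

open Metric Filter MeasureTheory Asymptotics

noncomputable section

/-- `ℝⁿ` as a Euclidean space. -/
abbrev En (n : ℕ) := EuclideanSpace ℝ (Fin n)

/-- The Euclidean group `E(n)`, i.e. the isometry group of `ℝⁿ`. -/
abbrev Isom (n : ℕ) := En n ≃ᵢ En n

/-- The translation part `tran γ = γ 0` of a Euclidean isometry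
(for `γ : x ↦ Ax + a` this is `a`). -/
def tran {n : ℕ} (γ : Isom n) : En n := γ 0

/-- The orthogonal part `ort γ` of a Euclidean isometry, as a self-map of `ℝⁿ`
(for `γ : x ↦ Ax + a` this is the map `x ↦ Ax`). -/
def ort {n : ℕ} (γ : Isom n) : En n → En n := fun x => γ x - γ 0

/-- A subgroup `Γ ≤ E(n)` is discrete (in the topology of `O(n) × ℝⁿ`) if and only if the
identity is isolated in `Γ`; the metric `sup_{‖x‖ ≤ 1} ‖γ x - x‖` induces that topology. -/
def IsDiscreteSubgroup {n : ℕ} (Γ : Subgroup (Isom n)) : Prop :=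
  ∃ ε > 0, ∀ γ ∈ Γ, γ ≠ 1 → ∃ x : En n, ‖x‖ ≤ 1 ∧ ε ≤ dist (γ x) x

/-- The subgroup of all translations of `ℝⁿ` inside the isometry group; the translation
subgroup `Γ_T` of a subgroup `Γ ≤ E(n)` is then `Γ ⊓ Translations n`. -/
def Translations (n : ℕ) : Subgroup (Isom n) where
  carrier := {γ : Isom n | ∀ x : En n, γ x = x + γ 0}
  one_mem' := by intro x; simp
  mul_mem' := by
    intro a b ha hb x
    show a (b x) = x + a (b 0)
    rw [hb x, ha (x + b 0), hb 0, ha (0 + b 0)]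
    abel
  inv_mem' := by
    intro a ha x
    show a.symm x = x + a.symm 0
    apply a.injective
    have h0 : a (a.symm 0) = 0 := a.apply_symm_apply 0
    rw [a.apply_symm_apply, ha (x + a.symm 0)]
    have hsum : a.symm 0 + a 0 = 0 := by
      have := ha (a.symm 0); rw [h0] at this; exact this.symm
    rw [add_assoc, hsum, add_zero]

/-- `(G, V)` is a cocompact translation pair of `Γ`: `G ≤ Γ`, `V` is a (nonempty) affine
subspace of `ℝⁿ` with `GV = V`, every `g ∈ G` restricts to `V` as a translation
(by the vector `v = tran_V(g)`), and `V/G` is compact. -/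
structure IsCocompactTranslationPair {n : ℕ} (Γ G : Subgroup (Isom n))
    (V : AffineSubspace ℝ (En n)) : Prop where
  le : G ≤ Γ
  nonempty : (V : Set (En n)).Nonempty
  invariant : ∀ g ∈ G, ∀ x ∈ (V : Set (En n)), g x ∈ (V : Set (En n))
  translation : ∀ g ∈ G, ∃ v : En n, ∀ x ∈ (V : Set (En n)), g x = x + v
  cocompact : ∃ K : Set (En n), IsCompact K ∧ K ⊆ (V : Set (En n)) ∧
    ∀ x ∈ (V : Set (En n)), ∃ g ∈ G, g x ∈ K

/-- `N_Γ(r)`: the number of `γ ∈ Γ` with `|tran γ| ≤ r`. -/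
def NCount {n : ℕ} (Γ : Subgroup (Isom n)) (r : ℝ) : ℕ :=
  {γ : Isom n | γ ∈ Γ ∧ ‖tran γ‖ ≤ r}.ncard

/-- `N_G^V(r)`: the number of `γ ∈ G` whose translation vector `tran_V γ` on `V`
satisfies `|tran_V γ| ≤ r`. -/
def NVCount {n : ℕ} (G : Subgroup (Isom n)) (V : AffineSubspace ℝ (En n)) (r : ℝ) : ℕ :=
  {γ : Isom n | γ ∈ G ∧ ∃ v : En n,
    (∀ x ∈ (V : Set (En n)), γ x = x + v) ∧ ‖v‖ ≤ r}.ncard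

/-- `Λ_G(r)`: the number of distinct orthogonal parts `ort γ` over `γ ∈ G` with
`|tran γ| ≤ r`. -/
def LamCount {n : ℕ} (G : Subgroup (Isom n)) (r : ℝ) : ℕ :=
  {f : En n → En n | ∃ γ, γ ∈ G ∧ ‖tran γ‖ ≤ r ∧ f = ort γ}.ncard

/-- `Λ_G^V(r)`: the number of distinct orthogonal parts `ort γ` over `γ ∈ G` with
`|tran_V γ| ≤ r`. -/
def LamVCount {n : ℕ} (G : Subgroup (Isom n)) (V : AffineSubspace ℝ (En n)) (r : ℝ) : ℕ :=
  {f : En n → En n | ∃ γ, γ ∈ G ∧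
    (∃ v : En n, (∀ x ∈ (V : Set (En n)), γ x = x + v) ∧ ‖v‖ ≤ r) ∧ f = ort γ}.ncard

/-! Conjugation by `A` multiplies the norm of translation parts by `λ ≤ 1`, so it maps the set
of `δ ∈ Γ` with `‖tran δ‖ ≤ ‖tran γ‖` injectively into itself. That set is finite: by Mazur–Ulam
an isometry is determined by its linear and translation parts, which for distinct elements of a
discrete group are uniformly far apart and here range over a bounded subset of a
finite-dimensional space. An injective self-map of a finite set is onto, so `γ` is a conjugate. -/

open Bornology in
theorem Metric.finite_of_isBounded_of_pairwise_le_dist {X : Type*} [MetricSpace X]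
    [ProperSpace X] {s : Set X} (hs : IsBounded s) {ε : ℝ} (hε : 0 < ε)
    (hsep : s.Pairwise fun x y => ε ≤ dist x y) : s.Finite := by
  refine (isCompact_of_isClosed_isBounded (isClosed_of_pairwise_le_dist hε hsep) hs).finite ?_
  refine isDiscrete_iff_forall_mem_exists_isOpen.2 fun x hx => ⟨ball x ε, isOpen_ball, ?_⟩
  ext y
  simp only [Set.mem_inter_iff, mem_ball, Set.mem_singleton_iff]
  constructor
  · rintro ⟨hyx, hy⟩
    by_contra hne
    exact (hsep hy hx hne).not_gt hyx
  · rintro rfl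
    exact ⟨mem_ball_self hε, hx⟩

namespace IsometryEquiv

variable {E F : Type*} [NormedAddCommGroup E] [NormedSpace ℝ E]
  [NormedAddCommGroup F] [NormedSpace ℝ F]

/-- The pair `(ort f, tran f)`, with the linear part as a continuous linear map. -/
def affineParts (f : E ≃ᵢ F) : (E →L[ℝ] F) × F :=
  ((f.toRealLinearIsometryEquiv : E →L[ℝ] F), f 0)

theorem apply_eq_affineParts (f : E ≃ᵢ F) (x : E) :
    f x = f.affineParts.1 x + f.affineParts.2 := by
  simp [affineParts]

theorem affineParts_injective : Function.Injective (affineParts : (E ≃ᵢ F) → _) :=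
  fun f g h => ext fun x => by rw [apply_eq_affineParts, apply_eq_affineParts, h]

theorem norm_affineParts_le (f : E ≃ᵢ F) : ‖f.affineParts‖ ≤ max 1 ‖f 0‖ :=
  max_le_max (LinearIsometry.norm_toContinuousLinearMap_le _) le_rfl

theorem dist_apply_le_two_mul_dist_affineParts (f g : E ≃ᵢ F) {x : E} (hx : ‖x‖ ≤ 1) :
    dist (f x) (g x) ≤ 2 * dist f.affineParts g.affineParts := by
  calc dist (f x) (g x)
      = ‖(f.affineParts.1 - g.affineParts.1) x + (f.affineParts.2 - g.affineParts.2)‖ := by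
        rw [dist_eq_norm, apply_eq_affineParts f, apply_eq_affineParts g, sub_apply]
        abel_nf
    _ ≤ dist f.affineParts.1 g.affineParts.1 + dist f.affineParts.2 g.affineParts.2 := by
        rw [dist_eq_norm, dist_eq_norm]
        refine norm_add_le_of_le ?_ le_rfl
        exact (ContinuousLinearMap.le_opNorm _ x).trans (mul_le_of_le_one_right (norm_nonneg _) hx)
    _ ≤ 2 * dist f.affineParts g.affineParts :=
        (add_le_add (le_max_left _ _) (le_max_right _ _)).trans_eq (two_mul _).symm

end IsometryEquiv

open IsometryEquiv

theorem IsDiscreteSubgroup.exists_pairwise_le_dist_affineParts {n : ℕ}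
    {Γ : Subgroup (Isom n)} (hΓ : IsDiscreteSubgroup Γ) :
    ∃ ε > 0, (Γ : Set (Isom n)).Pairwise fun δ δ' =>
      ε ≤ dist δ.affineParts δ'.affineParts := by
  obtain ⟨ε, hε, hdisc⟩ := hΓ
  refine ⟨ε / 2, half_pos hε, fun δ hδ δ' hδ' hne => ?_⟩
  obtain ⟨x, hx, hεx⟩ := hdisc (δ'⁻¹ * δ) (mul_mem (inv_mem hδ') hδ)
    (mt inv_mul_eq_one.mp (Ne.symm hne))
  have hmove : dist ((δ'⁻¹ * δ) x) x = dist (δ x) (δ' x) := by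
    rw [← δ'.dist_eq]
    exact congrArg (dist · _) (δ'.apply_symm_apply (δ x))
  linarith [dist_apply_le_two_mul_dist_affineParts δ δ' hx]

theorem IsDiscreteSubgroup.finite_setOf_norm_tran_le {n : ℕ} {Γ : Subgroup (Isom n)}
    (hΓ : IsDiscreteSubgroup Γ) (R : ℝ) : {δ | δ ∈ Γ ∧ ‖tran δ‖ ≤ R}.Finite := by
  obtain ⟨ε, hε, hsep⟩ := hΓ.exists_pairwise_le_dist_affineParts
  refine Set.Finite.of_finite_image ?_ affineParts_injective.injOn
  refine Metric.finite_of_isBounded_of_pairwise_le_dist ?_ hε ?_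
  · refine (isBounded_closedBall (x := 0) (r := max 1 R)).subset ?_
    rintro _ ⟨δ, ⟨-, hδ⟩, rfl⟩
    rw [mem_closedBall_zero_iff]
    exact (norm_affineParts_le δ).trans (max_le_max le_rfl hδ)
  · exact (affineParts_injective.injOn.pairwise_image).2 (hsep.mono fun _ h => h.1)

theorem conjugation_nonexpanding_surjective_general {n : ℕ} (Γ : Subgroup (Isom n))
    (hΓ : IsDiscreteSubgroup Γ) (A : En n ≃ₗ[ℝ] En n) (lam : ℝ)
    (hlam1 : lam ≤ 1) (hconf : ∀ x : En n, ‖A x‖ = lam * ‖x‖)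
    (hconj : ∀ γ ∈ Γ, ∃ γ' ∈ Γ, ∀ x : En n, γ' x = A (γ (A.symm x))) :
    ∀ γ ∈ Γ, ∃ γ₀ ∈ Γ, ∀ x : En n, γ x = A (γ₀ (A.symm x)) := by
  intro γ hγ
  choose! c hcΓ hc using hconj
  set S := {δ | δ ∈ Γ ∧ ‖tran δ‖ ≤ ‖tran γ‖}
  have hmaps : Set.MapsTo c S S := fun δ ⟨hδ, hδγ⟩ => by
    refine ⟨hcΓ δ hδ, ?_⟩
    have htran : tran (c δ) = A (tran δ) := by rw [tran, hc δ hδ, map_zero]; rfl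
    rw [htran, hconf]
    exact (mul_le_of_le_one_left (norm_nonneg _) hlam1).trans hδγ
  have hinj : Set.InjOn c S := fun δ hδ δ' hδ' h => ext fun x => A.injective <| by
    rw [← A.symm_apply_apply x, ← hc δ hδ.1, ← hc δ' hδ'.1, h]
  have hbij : Set.BijOn c S S :=
    ((hΓ.finite_setOf_norm_tran_le _).injOn_iff_bijOn_of_mapsTo hmaps).1 hinj
  obtain ⟨δ, hδ, rfl⟩ := hbij.surjOn ⟨hγ, le_rfl⟩
  exact ⟨δ, hδ.1, hc δ hδ.1⟩

/-- Let `Γ ≤ E(n)` be discrete and `A = λA'` a linear conformal bijection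
with `A' ∈ O(n)` and `0 < λ ≤ 1`. If `AΓA⁻¹ ⊆ Γ`, then `AΓA⁻¹ = Γ`. -/
theorem conjugation_nonexpanding_surjective {n : ℕ} (Γ : Subgroup (Isom n))
    (hΓ : IsDiscreteSubgroup Γ) (A : En n ≃ₗ[ℝ] En n) (lam : ℝ)
    (hlam : 0 < lam) (hlam1 : lam ≤ 1) (hconf : ∀ x : En n, ‖A x‖ = lam * ‖x‖)
    (hconj : ∀ γ ∈ Γ, ∃ γ' ∈ Γ, ∀ x : En n, γ' x = A (γ (A.symm x))) :
    ∀ γ ∈ Γ, ∃ γ₀ ∈ Γ, ∀ x : En n, γ x = A (γ₀ (A.symm x)) :=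
  conjugation_nonexpanding_surjective_general Γ hΓ A lam hlam1 hconf hconj
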